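/- Let V be a finite-dimensional ℚ_ℓ-vector space, T ⊆ V a ℤ_ℓ-lattice (full-rank ℤ_ℓ-submodule), and F a ℤ_ℓ-linear endomorphism of V preserving T. Suppose V^F = 0 (i.e., 1 − F is injective on V). Then the map v + T ↦ (F v − v) + T induces an isomorphism between the F-fixed points (V/T)^F of V/T and the quotient T/(1 − F)T. -/

import Mathlib

/-!
Since `V^F = 0` and `V` is finite-dimensional over `ℚ_ℓ` (where the `ℤ_ℓ`-linear `F` is
automatically `ℚ_ℓ`-linear), `L = 1 - F` is invertible on `V`. Then `t ↦ L⁻¹(-t) + T` maps `T`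
onto `(V/T)^F`, because `F v - v = t` holds exactly for `v = L⁻¹(-t)`, and its kernel is `L T`.
-/

open Function Submodule

section FixedPointsOfQuotient

variable {R M : Type*} [Ring R] [AddCommGroup M] [Module R M]

theorem LinearMap.injective_id_sub {F : M →ₗ[R] M} (hfix : ∀ v, F v = v → v = 0) :
    Injective (LinearMap.id - F : M →ₗ[R] M) := by
  refine (injective_iff_map_eq_zero _).2 fun v hv => hfix v ?_
  rw [LinearMap.sub_apply, LinearMap.id_apply, sub_eq_zero] at hv
  exact hv.symm

theorem LinearMap.injective_iff_surjective_of_isLocalization {R K V : Type*} [CommRing R]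
    (S : Submonoid R) [Field K] [Algebra R K] [IsLocalization S K] [AddCommGroup V]
    [Module R V] [Module K V] [IsScalarTower R K V] [FiniteDimensional K V] (f : V →ₗ[R] V) :
    Injective f ↔ Surjective f :=
  LinearMap.injective_iff_surjective (f := f.extendScalarsOfIsLocalization S K)

theorem Submodule.mk_mem_ker_mapQ_sub_id_iff (N : Submodule R M) {F : M →ₗ[R] M}
    (hF : ∀ x ∈ N, F x ∈ N) (v : M) :
    Submodule.Quotient.mk v ∈ LinearMap.ker (N.mapQ N F hF - LinearMap.id) ↔ F v - v ∈ N := by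
  rw [LinearMap.mem_ker, LinearMap.sub_apply, LinearMap.id_apply, sub_eq_zero, mapQ_apply,
    Quotient.eq]

variable (N : Submodule R M) {F : M →ₗ[R] M} (hF : ∀ x ∈ N, F x ∈ N)
  (hL : Bijective (LinearMap.id - F : M →ₗ[R] M))

theorem LinearEquiv.apply_ofBijective_id_sub_symm_sub (x : M) :
    F ((LinearEquiv.ofBijective _ hL).symm x) - (LinearEquiv.ofBijective _ hL).symm x = -x := by
  conv_rhs => rw [← (LinearEquiv.ofBijective _ hL).apply_symm_apply x]
  rw [LinearEquiv.ofBijective_apply, LinearMap.sub_apply, LinearMap.id_apply, neg_sub]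

noncomputable def Submodule.toFixedQuotient :
    N →ₗ[R] LinearMap.ker (N.mapQ N F hF - LinearMap.id) :=
  (N.mkQ ∘ₗ (LinearEquiv.ofBijective _ hL).symm.toLinearMap ∘ₗ (-N.subtype)).codRestrict _
    fun t => by
      rw [LinearMap.comp_apply, LinearMap.comp_apply, LinearEquiv.coe_coe, mkQ_apply,
        mk_mem_ker_mapQ_sub_id_iff, LinearEquiv.apply_ofBijective_id_sub_symm_sub,
        LinearMap.neg_apply, neg_neg]
      exact t.2

theorem Submodule.coe_toFixedQuotient_apply (t : N) :
    (N.toFixedQuotient hF hL t : M ⧸ N) =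
      Submodule.Quotient.mk ((LinearEquiv.ofBijective _ hL).symm (-(t : M))) :=
  rfl

theorem Submodule.coe_toFixedQuotient_sub (v : M) (hv : F v - v ∈ N) :
    (N.toFixedQuotient hF hL ⟨F v - v, hv⟩ : M ⧸ N) = Submodule.Quotient.mk v := by
  rw [coe_toFixedQuotient_apply, neg_sub]
  exact congrArg _ (LinearEquiv.ofBijective_symm_apply_apply _ v)

theorem Submodule.surjective_toFixedQuotient : Surjective (N.toFixedQuotient hF hL) := by
  rintro ⟨x, hx⟩
  obtain ⟨v, rfl⟩ := Quotient.mk_surjective N x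
  have hv := (mk_mem_ker_mapQ_sub_id_iff N hF v).1 hx
  exact ⟨⟨F v - v, hv⟩, Subtype.ext (coe_toFixedQuotient_sub N hF hL v hv)⟩

theorem Submodule.ker_toFixedQuotient :
    LinearMap.ker (N.toFixedQuotient hF hL) =
      comap N.subtype (map (LinearMap.id - F) N) := by
  set L := LinearEquiv.ofBijective _ hL
  ext t
  rw [LinearMap.mem_ker, ← Subtype.coe_inj, coe_toFixedQuotient_apply, ZeroMemClass.coe_zero,
    Quotient.mk_eq_zero, mem_comap, subtype_apply, mem_map]
  constructor
  · intro h
    refine ⟨-L.symm (-(t : M)), N.neg_mem h, ?_⟩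
    rw [map_neg, neg_eq_iff_eq_neg]
    exact L.apply_symm_apply _
  · rintro ⟨s, hs, hst⟩
    rw [← hst, ← map_neg, LinearEquiv.ofBijective_symm_apply_apply]
    exact N.neg_mem hs

noncomputable def Submodule.fixedQuotientEquiv :
    (N ⧸ comap N.subtype (map (LinearMap.id - F) N)) ≃ₗ[R]
      LinearMap.ker (N.mapQ N F hF - LinearMap.id) :=
  (quotEquivOfEq _ _ (N.ker_toFixedQuotient hF hL).symm).trans
    ((N.toFixedQuotient hF hL).quotKerEquivOfSurjective (N.surjective_toFixedQuotient hF hL))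

theorem Submodule.fixedQuotientEquiv_symm_mk (v : M) (hv : F v - v ∈ N)
    (hmem : Submodule.Quotient.mk v ∈ LinearMap.ker (N.mapQ N F hF - LinearMap.id)) :
    (N.fixedQuotientEquiv hF hL).symm ⟨Submodule.Quotient.mk v, hmem⟩ =
      Submodule.Quotient.mk ⟨F v - v, hv⟩ := by
  rw [LinearEquiv.symm_apply_eq]
  exact (Subtype.ext (coe_toFixedQuotient_sub N hF hL v hv)).symm

end FixedPointsOfQuotient

/-- Let `V` be a finite-dimensional `ℚ_ℓ`-vector space, `T` a full `ℤ_ℓ`-lattice, and `F`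
a `ℤ_ℓ`-linear endomorphism of `V` preserving `T` with `V^F = 0`. Then `v + T ↦ (Fv − v) + T`
induces an isomorphism `(V/T)^F ≅ T/(1 − F)T`. -/
theorem stmt8 (p : ℕ) [Fact p.Prime] {V : Type*} [AddCommGroup V] [Module ℚ_[p] V]
    [FiniteDimensional ℚ_[p] V] [Module ℤ_[p] V] [IsScalarTower ℤ_[p] ℚ_[p] V]
    (T : Submodule ℤ_[p] V)
    (F : V →ₗ[ℤ_[p]] V) (hFT : ∀ x ∈ T, F x ∈ T)
    (hfix : ∀ v : V, F v = v → v = 0) :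
    let Fbar : (V ⧸ T) →ₗ[ℤ_[p]] (V ⧸ T) := Submodule.mapQ T T F hFT
    let S : Submodule ℤ_[p] ↥T := Submodule.comap T.subtype (Submodule.map (LinearMap.id - F) T)
    ∃ ψ : ↥(LinearMap.ker (Fbar - LinearMap.id)) ≃+ (↥T ⧸ S),
      ∀ (v : V) (hv : F v - v ∈ T)
        (h : Fbar (Submodule.Quotient.mk v) = Submodule.Quotient.mk v),
        ψ ⟨Submodule.Quotient.mk v, by
            simp [LinearMap.mem_ker, LinearMap.sub_apply, h]⟩ =
          Submodule.Quotient.mk ⟨F v - v, hv⟩ := by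
  have hinj := LinearMap.injective_id_sub hfix
  have hL : Bijective (LinearMap.id - F : V →ₗ[ℤ_[p]] V) :=
    ⟨hinj, (LinearMap.injective_iff_surjective_of_isLocalization
      (nonZeroDivisors ℤ_[p]) (K := ℚ_[p]) _).1 hinj⟩
  exact ⟨(T.fixedQuotientEquiv hFT hL).symm.toAddEquiv,
    fun v hv _ => T.fixedQuotientEquiv_symm_mk hFT hL v hv _⟩
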